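/- arXiv:2505.21666 — 3 statements merged into one kernel-verified Lean document; each statement's English description precedes it below -/
import Mathlib

section
/- Let f1, f2 : ℝ^d → ℝ be differentiable functions, and suppose there are constants m1, m2 > 0 and L2 ≥ 0 such that f1(x) ≥ m1, f2(x) ≥ m2 and ‖∇f2(x)‖ ≤ L2 for all x ∈ ℝ^d. Then for every x ∈ ℝ^d, ‖∇(ln f1)(x) − ∇(ln f2)(x)‖ ≤ (1/m1)·‖∇f1(x) − ∇f2(x)‖ + (L2/(m1·m2))·|f2(x) − f1(x)|. -/
section GradientLog

variable {F : Type*} [NormedAddCommGroup F] [InnerProductSpace ℝ F] [CompleteSpace F]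
  {f : F → ℝ} {f' x : F}

theorem HasGradientAt.log (hf : HasGradientAt f f' x) (hx : f x ≠ 0) :
    HasGradientAt (fun y => Real.log (f y)) ((f x)⁻¹ • f') x := by
  rw [hasGradientAt_iff_hasFDerivAt] at hf ⊢
  simpa using hf.log hx

theorem gradient_log (hf : DifferentiableAt ℝ f x) (hx : f x ≠ 0) :
    gradient (fun y => Real.log (f y)) x = (f x)⁻¹ • gradient f x :=
  (hf.hasGradientAt.log hx).gradient

end GradientLog

theorem norm_inv_smul_sub_inv_smul_le {E : Type*} [SeminormedAddCommGroup E] [NormedSpace ℝ E]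
    {a b : E} {c₁ c₂ m₁ m₂ L : ℝ} (hm₁ : 0 < m₁) (hm₂ : 0 < m₂) (hc₁ : m₁ ≤ c₁) (hc₂ : m₂ ≤ c₂)
    (hb : ‖b‖ ≤ L) :
    ‖c₁⁻¹ • a - c₂⁻¹ • b‖ ≤ (1 / m₁) * ‖a - b‖ + (L / (m₁ * m₂)) * |c₂ - c₁| := by
  have hc₁pos : 0 < c₁ := hm₁.trans_le hc₁
  have hc₂pos : 0 < c₂ := hm₂.trans_le hc₂
  have hsplit : c₁⁻¹ • a - c₂⁻¹ • b = c₁⁻¹ • (a - b) + ((c₂ - c₁) / (c₁ * c₂)) • b := by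
    rw [show (c₂ - c₁) / (c₁ * c₂) = c₁⁻¹ - c₂⁻¹ by field_simp, smul_sub, sub_smul]
    abel
  calc ‖c₁⁻¹ • a - c₂⁻¹ • b‖
      ≤ c₁⁻¹ * ‖a - b‖ + |c₂ - c₁| / (c₁ * c₂) * ‖b‖ := by
        rw [hsplit]
        refine (norm_add_le _ _).trans_eq ?_
        rw [norm_smul, norm_smul, Real.norm_of_nonneg (inv_nonneg.2 hc₁pos.le), Real.norm_eq_abs,
          abs_div, abs_of_pos (mul_pos hc₁pos hc₂pos)]
    _ ≤ m₁⁻¹ * ‖a - b‖ + |c₂ - c₁| / (m₁ * m₂) * L := by gcongr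
    _ = (1 / m₁) * ‖a - b‖ + (L / (m₁ * m₂)) * |c₂ - c₁| := by ring

theorem gradient_log_diff_bound_general {d : ℕ}
    (f1 f2 : EuclideanSpace ℝ (Fin d) → ℝ)
    (hf1 : Differentiable ℝ f1) (hf2 : Differentiable ℝ f2)
    (m1 m2 L2 : ℝ) (hm1 : 0 < m1) (hm2 : 0 < m2)
    (hf1lb : ∀ x, m1 ≤ f1 x) (hf2lb : ∀ x, m2 ≤ f2 x)
    (hf2grad : ∀ x, ‖gradient f2 x‖ ≤ L2)
    (x : EuclideanSpace ℝ (Fin d)) :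
    ‖gradient (fun y => Real.log (f1 y)) x - gradient (fun y => Real.log (f2 y)) x‖ ≤
      (1 / m1) * ‖gradient f1 x - gradient f2 x‖ +
        (L2 / (m1 * m2)) * |f2 x - f1 x| := by
  rw [gradient_log (hf1 x) (hm1.trans_le (hf1lb x)).ne',
    gradient_log (hf2 x) (hm2.trans_le (hf2lb x)).ne']
  exact norm_inv_smul_sub_inv_smul_le hm1 hm2 (hf1lb x) (hf2lb x) (hf2grad x)

/-- Lemma on gradients of logarithms.
If `f1, f2 : ℝ^d → ℝ` are differentiable, bounded below by positive constants `m1, m2`,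
and `‖∇f2‖ ≤ L2` everywhere, then for every `x`,
`‖∇(ln f1)(x) − ∇(ln f2)(x)‖ ≤ (1/m1)‖∇f1(x) − ∇f2(x)‖ + (L2/(m1 m2))|f2(x) − f1(x)|`. -/
theorem gradient_log_diff_bound {d : ℕ}
    (f1 f2 : EuclideanSpace ℝ (Fin d) → ℝ)
    (hf1 : Differentiable ℝ f1) (hf2 : Differentiable ℝ f2)
    (m1 m2 L2 : ℝ) (hm1 : 0 < m1) (hm2 : 0 < m2) (hL2 : 0 ≤ L2)
    (hf1lb : ∀ x, m1 ≤ f1 x) (hf2lb : ∀ x, m2 ≤ f2 x)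
    (hf2grad : ∀ x, ‖gradient f2 x‖ ≤ L2)
    (x : EuclideanSpace ℝ (Fin d)) :
    ‖gradient (fun y => Real.log (f1 y)) x - gradient (fun y => Real.log (f2 y)) x‖ ≤
      (1 / m1) * ‖gradient f1 x - gradient f2 x‖ +
        (L2 / (m1 * m2)) * |f2 x - f1 x| :=
  gradient_log_diff_bound_general f1 f2 hf1 hf2 m1 m2 L2 hm1 hm2 hf1lb hf2lb hf2grad x
end

section
/- Fix δ > 0 and d ≥ 1. Let f : ℝ^d → ℝ be twice continuously differentiable with sup_x ‖∇²f(x)‖_op ≤ M, where ‖·‖_op is the operator norm of the Hessian. Then for every x ∈ ℝ^d, ‖∇̂f(x) − ∇f(x)‖ ≤ d·δ·M/2. -/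
/-! Rotation invariance of `σ` gives `∫ u dσ = 0` and `∫ ⟪g, u⟫ u dσ = g / d`: the quadratic form
`g ↦ ∫ ⟪g, u⟫² dσ` takes the same value on all vectors of a given norm (a reflection carries one to
the other), and summed over an orthonormal basis it is `∫ ‖u‖² dσ = 1`; polarization recovers the
bilinear form. Hence the estimator is exact on the first-order Taylor polynomial of `f` at `x`, and
`∇̂f(x) - ∇f(x) = (d / δ) ∫ r(u) u dσ`, where the Taylor remainder satisfies `|r(u)| ≤ M δ² / 2`
on the unit sphere. -/

open MeasureTheory

/-- The spherical-smoothing gradient estimator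
`∇̂f(x) := (d/δ)·E_{u∼σ}[ f(x + δu)·u ]` for `f : ℝ^d → ℝ`. -/
noncomputable def sphGradEst {d : ℕ} (σ : Measure (EuclideanSpace ℝ (Fin d))) (δ : ℝ)
    (f : EuclideanSpace ℝ (Fin d) → ℝ) (x : EuclideanSpace ℝ (Fin d)) :
    EuclideanSpace ℝ (Fin d) :=
  ((d : ℝ) / δ) • ∫ u, f (x + δ • u) • u ∂σ

open Module
open scoped RealInnerProductSpace

theorem norm_sub_sub_fderiv_le_of_norm_fderiv_sub_le {E F : Type*} [NormedAddCommGroup E]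
    [NormedSpace ℝ E] [NormedAddCommGroup F] [NormedSpace ℝ F] {f : E → F} {x : E} {M : ℝ}
    (hf : Differentiable ℝ f) (hM : ∀ y, ‖fderiv ℝ f y - fderiv ℝ f x‖ ≤ M * ‖y - x‖) (y : E) :
    ‖f y - f x - fderiv ℝ f x (y - x)‖ ≤ M / 2 * ‖y - x‖ ^ 2 := by
  set h := y - x
  set φ : ℝ → F := fun t => f (x + t • h) - f x - t • fderiv ℝ f x h
  have hφ : ∀ t, HasDerivAt φ (fderiv ℝ f (x + t • h) h - fderiv ℝ f x h) t := by
    intro t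
    have hline : HasDerivAt (fun s : ℝ => x + s • h) h t := by
      simpa using ((hasDerivAt_id t).smul_const h).const_add x
    exact (((hf _).hasFDerivAt.comp_hasDerivAt t hline).sub_const (f x)).sub
      (by simpa using (hasDerivAt_id t).smul_const (fderiv ℝ f x h))
  have hB : ∀ t, HasDerivAt (fun t => M / 2 * ‖h‖ ^ 2 * t ^ 2) (M * ‖h‖ ^ 2 * t) t := by
    intro t
    refine ((hasDerivAt_pow 2 t).const_mul (M / 2 * ‖h‖ ^ 2)).congr_deriv ?_
    ring
  have hφ1 := image_norm_le_of_norm_deriv_right_le_deriv_boundary (a := 0) (b := 1)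
    (fun t _ => (hφ t).continuousAt.continuousWithinAt) (fun t _ => (hφ t).hasDerivWithinAt)
    (by simp [φ]) hB ?_ (Set.right_mem_Icc.2 zero_le_one)
  · simpa [φ, h] using hφ1
  intro t ht
  calc ‖fderiv ℝ f (x + t • h) h - fderiv ℝ f x h‖
      = ‖(fderiv ℝ f (x + t • h) - fderiv ℝ f x) h‖ := rfl
    _ ≤ ‖fderiv ℝ f (x + t • h) - fderiv ℝ f x‖ * ‖h‖ := ContinuousLinearMap.le_opNorm _ _
    _ ≤ M * ‖t • h‖ * ‖h‖ := by gcongr; simpa using hM (x + t • h)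
    _ = M * ‖h‖ ^ 2 * t := by rw [norm_smul, Real.norm_of_nonneg ht.1]; ring

section RotationInvariant

variable {E : Type*} [NormedAddCommGroup E] [InnerProductSpace ℝ E] [MeasurableSpace E]
  [BorelSpace E] {σ : Measure E}

theorem Continuous.integrable_of_ae_norm_eq_one [FiniteDimensional ℝ E] [IsFiniteMeasure σ]
    (hσ : ∀ᵐ u ∂σ, ‖u‖ = 1) {F : Type*} [NormedAddCommGroup F] {φ : E → F}
    (hφ : Continuous φ) : Integrable φ σ := by
  have hK : ∀ᵐ u ∂σ, u ∈ Metric.sphere (0 : E) 1 := by simpa using hσ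
  rw [← Measure.restrict_eq_self_of_ae_mem hK]
  exact hφ.continuousOn.integrableOn_compact (isCompact_sphere 0 1)

theorem integral_comp_linearIsometryEquiv (hσ : ∀ L : E ≃ₗᵢ[ℝ] E, σ.map L = σ)
    {F : Type*} [NormedAddCommGroup F] [NormedSpace ℝ F] (L : E ≃ₗᵢ[ℝ] E) (φ : E → F) :
    ∫ u, φ (L u) ∂σ = ∫ u, φ u ∂σ := by
  conv_rhs => rw [← hσ L]
  exact (integral_map_equiv L.toHomeomorph.toMeasurableEquiv φ).symm

theorem integral_id_eq_zero (hσ : ∀ L : E ≃ₗᵢ[ℝ] E, σ.map L = σ) : ∫ u, u ∂σ = 0 := by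
  have h : -∫ u, u ∂σ = ∫ u, u ∂σ := by
    rw [← integral_neg]
    exact integral_comp_linearIsometryEquiv hσ (LinearIsometryEquiv.neg ℝ) id
  simpa [← two_smul ℝ, neg_eq_iff_add_eq_zero] using h

theorem integral_comp_inner_eq_of_norm_eq (hσ : ∀ L : E ≃ₗᵢ[ℝ] E, σ.map L = σ)
    {F : Type*} [NormedAddCommGroup F] [NormedSpace ℝ F] (φ : ℝ → F) {e e' : E}
    (he : ‖e‖ = ‖e'‖) : ∫ u, φ ⟪e, u⟫ ∂σ = ∫ u, φ ⟪e', u⟫ ∂σ := by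
  set R := (ℝ ∙ (e' - e))ᗮ.reflection
  have hR : R e' = e := Submodule.reflection_sub he.symm
  rw [← integral_comp_linearIsometryEquiv hσ R]
  congr! 3 with u
  rw [← hR, LinearIsometryEquiv.inner_map_map]

theorem integral_inner_sq [FiniteDimensional ℝ E] [IsProbabilityMeasure σ]
    (hσ_sphere : ∀ᵐ u ∂σ, ‖u‖ = 1) (hσ : ∀ L : E ≃ₗᵢ[ℝ] E, σ.map L = σ) (g : E) :
    ∫ u, ⟪g, u⟫ ^ 2 ∂σ = ‖g‖ ^ 2 / finrank ℝ E := by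
  let b := stdOrthonormalBasis ℝ E
  have hsum : ∑ i, ∫ u, ⟪b i, u⟫ ^ 2 ∂σ = 1 := by
    rw [← integral_finsetSum _ fun i _ =>
      (by fun_prop : Continuous fun u => ⟪b i, u⟫ ^ 2).integrable_of_ae_norm_eq_one hσ_sphere]
    rw [integral_congr_ae (g := fun _ => (1 : ℝ))
      (hσ_sphere.mono fun u hu => by simp [b.sum_sq_inner_right, hu]), integral_const,
      probReal_univ, one_smul]
  have hterm : ∀ i, ∫ u, ⟪g, u⟫ ^ 2 ∂σ = ‖g‖ ^ 2 * ∫ u, ⟪b i, u⟫ ^ 2 ∂σ := fun i => by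
    rw [integral_comp_inner_eq_of_norm_eq hσ (· ^ 2) (e' := ‖g‖ • b i) (by simp [norm_smul]),
      ← integral_const_mul]
    simp [inner_smul_left, mul_pow]
  obtain ⟨u, hu⟩ := hσ_sphere.exists
  have hn : finrank ℝ E ≠ 0 :=
    (finrank_pos_iff_exists_ne_zero.2 ⟨u, norm_ne_zero_iff.1 (by simp [hu])⟩).ne'
  rw [eq_div_iff (by exact_mod_cast hn)]
  calc (∫ u, ⟪g, u⟫ ^ 2 ∂σ) * finrank ℝ E = ∑ i, ∫ u, ⟪g, u⟫ ^ 2 ∂σ := by simp [mul_comm]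
    _ = ∑ i, ‖g‖ ^ 2 * ∫ u, ⟪b i, u⟫ ^ 2 ∂σ := Finset.sum_congr rfl fun i _ => hterm i
    _ = ‖g‖ ^ 2 := by rw [← Finset.mul_sum, hsum, mul_one]

theorem integral_inner_smul [FiniteDimensional ℝ E] [IsProbabilityMeasure σ]
    (hσ_sphere : ∀ᵐ u ∂σ, ‖u‖ = 1) (hσ : ∀ L : E ≃ₗᵢ[ℝ] E, σ.map L = σ) (g : E) :
    ∫ u, ⟪g, u⟫ • u ∂σ = (finrank ℝ E : ℝ)⁻¹ • g := by
  refine ext_inner_left ℝ fun h => ?_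
  have hpol : ∀ u, ⟪h, ⟪g, u⟫ • u⟫ = (⟪g + h, u⟫ ^ 2 - ⟪g - h, u⟫ ^ 2) / 4 := fun u => by
    rw [inner_smul_right, inner_add_left, inner_sub_left]; ring
  rw [← integral_inner ((by fun_prop : Continuous fun u => ⟪g, u⟫ • u).integrable_of_ae_norm_eq_one
    hσ_sphere), integral_congr_ae (Filter.Eventually.of_forall hpol), integral_div,
    integral_sub ((by fun_prop : Continuous fun u => ⟪g + h, u⟫ ^ 2).integrable_of_ae_norm_eq_one
    hσ_sphere) ((by fun_prop : Continuous fun u => ⟪g - h, u⟫ ^ 2).integrable_of_ae_norm_eq_one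
    hσ_sphere), integral_inner_sq hσ_sphere hσ, integral_inner_sq hσ_sphere hσ, inner_smul_right,
    norm_add_sq_real, norm_sub_sq_real, real_inner_comm]
  ring

theorem integral_const_add_inner_smul [FiniteDimensional ℝ E] [IsProbabilityMeasure σ]
    (hσ_sphere : ∀ᵐ u ∂σ, ‖u‖ = 1) (hσ : ∀ L : E ≃ₗᵢ[ℝ] E, σ.map L = σ) (a : ℝ) (g : E) :
    ∫ u, (a + ⟪g, u⟫) • u ∂σ = (finrank ℝ E : ℝ)⁻¹ • g := by
  simp_rw [add_smul]
  rw [integral_add ((by fun_prop : Continuous fun u : E => a • u).integrable_of_ae_norm_eq_one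
    hσ_sphere) ((by fun_prop : Continuous fun u => ⟪g, u⟫ • u).integrable_of_ae_norm_eq_one
    hσ_sphere), integral_smul, integral_id_eq_zero hσ, smul_zero, zero_add,
    integral_inner_smul hσ_sphere hσ]

theorem norm_integral_smul_sub_integral_smul_le [FiniteDimensional ℝ E] [IsProbabilityMeasure σ]
    (hσ_sphere : ∀ᵐ u ∂σ, ‖u‖ = 1) {φ ψ : E → ℝ} (hφ : Continuous φ) (hψ : Continuous ψ)
    {ε : ℝ} (h : ∀ᵐ u ∂σ, |φ u - ψ u| ≤ ε) :
    ‖∫ u, φ u • u ∂σ - ∫ u, ψ u • u ∂σ‖ ≤ ε := by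
  rw [← integral_sub ((by fun_prop : Continuous fun u => φ u • u).integrable_of_ae_norm_eq_one
    hσ_sphere) ((by fun_prop : Continuous fun u => ψ u • u).integrable_of_ae_norm_eq_one hσ_sphere)]
  refine (norm_integral_le_of_norm_le_const (C := ε) ?_).trans (by simp)
  filter_upwards [h, hσ_sphere] with u hu hu1
  rwa [← sub_smul, norm_smul, hu1, mul_one, Real.norm_eq_abs]

end RotationInvariant

/-- accuracy of the spherical-smoothing gradient estimator.
Let `σ` be the uniform probability measure on the unit sphere `S^{d−1} ⊂ ℝ^d` (a probability
measure supported on the sphere and invariant under every linear isometry). If `f : ℝ^d → ℝ`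
is twice continuously differentiable with `‖∇²f(x)‖_op ≤ M` for all `x`, then for every `x`,
`‖∇̂f(x) − ∇f(x)‖ ≤ d·δ·M/2`. -/
theorem sphGradEst_error_bound {d : ℕ} (hd : 1 ≤ d) (δ : ℝ) (hδ : 0 < δ)
    (σ : Measure (EuclideanSpace ℝ (Fin d))) [IsProbabilityMeasure σ]
    (hσ_sphere : ∀ᵐ u ∂σ, ‖u‖ = 1)
    (hσ_inv : ∀ L : EuclideanSpace ℝ (Fin d) ≃ₗᵢ[ℝ] EuclideanSpace ℝ (Fin d),
      σ.map L = σ)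
    (f : EuclideanSpace ℝ (Fin d) → ℝ) (hf : ContDiff ℝ 2 f)
    (M : ℝ) (hM : ∀ x, ‖fderiv ℝ (fun y => fderiv ℝ f y) x‖ ≤ M)
    (x : EuclideanSpace ℝ (Fin d)) :
    ‖sphGradEst σ δ f x - gradient f x‖ ≤ (d : ℝ) * δ * M / 2 := by
  set g := gradient f x
  have hlin : ∫ u, (f x + ⟪δ • g, u⟫) • u ∂σ = (δ / d) • g := by
    rw [integral_const_add_inner_smul hσ_sphere hσ_inv, finrank_euclideanSpace_fin, smul_smul,
      div_eq_inv_mul]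
  have hLip : ∀ y, ‖fderiv ℝ f y - fderiv ℝ f x‖ ≤ M * ‖y - x‖ := fun y =>
    convex_univ.norm_image_sub_le_of_norm_fderiv_le
      (fun z _ => (hf.fderiv_right (m := 1) le_rfl).differentiable one_ne_zero z) (fun z _ => hM z)
      trivial trivial
  have hrem : ∀ᵐ u ∂σ, |f (x + δ • u) - (f x + ⟪δ • g, u⟫)| ≤ M / 2 * δ ^ 2 := by
    filter_upwards [hσ_sphere] with u hu
    have := norm_sub_sub_fderiv_le_of_norm_fderiv_sub_le (hf.differentiable (by norm_num)) hLip
      (x + δ • u)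
    simpa [g, gradient, real_inner_smul_left, norm_smul, hu, abs_of_pos hδ, sub_sub] using this
  have hd₀ : (0 : ℝ) < d := by exact_mod_cast hd
  have herr : sphGradEst σ δ f x - g =
      (d / δ) • (∫ u, f (x + δ • u) • u ∂σ - ∫ u, (f x + ⟪δ • g, u⟫) • u ∂σ) := by
    rw [sphGradEst, hlin, smul_sub, smul_smul, div_mul_div_comm, mul_comm (d : ℝ),
      div_self (by positivity), one_smul]
  have hcont : Continuous f := hf.continuous
  calc ‖sphGradEst σ δ f x - g‖
      = d / δ * ‖∫ u, f (x + δ • u) • u ∂σ - ∫ u, (f x + ⟪δ • g, u⟫) • u ∂σ‖ := by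
        rw [herr, norm_smul, Real.norm_of_nonneg (by positivity)]
    _ ≤ d / δ * (M / 2 * δ ^ 2) := by
        gcongr
        exact norm_integral_smul_sub_integral_smul_le hσ_sphere (by fun_prop) (by fun_prop) hrem
    _ = d * δ * M / 2 := by field_simp
end

section
/- Let d ≥ 1, let h : ℝ × ℝ^d → ℝ^d be continuously differentiable in the space variable, g : ℝ → ℝ, and let u, m : ℝ × ℝ^d → ℝ be functions that are continuously differentiable in t and twice continuously differentiable in x, with m(t,x) > 0 for all (t,x). Suppose that at every (t,x): (i) ∂_t u = − ⟨h, ∇_x u⟩ − (g(t)²/2)·Δ_x u (backward Kolmogorov equation), and (ii) ∂_t m = − div_x(m·h) + (g(t)²/2)·Δ_x m (Fokker–Planck equation). Define the reversed drift h̄(t,x) := h(t,x) − g(t)²·∇_x m(t,x)/m(t,x). Then the product u·m satisfies, at every (t,x): ∂_t(u·m) = − div_x( u·m·h̄ ) − (g(t)²/2)·Δ_x(u·m). -/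
/-!
The flux of the reversed drift splits as `u m h̄ = u (m h) - g² u ∇m`. The product rules
`div (F V) = F div V + ⟪V, ∇F⟫`, `div ∇F = ΔF` and `Δ (F G) = F ΔG + G ΔF + 2 ⟪∇F, ∇G⟫`
then expand `div (u m h̄)` and `Δ (u m)`; the mixed terms `g² ⟪∇u, ∇m⟫` cancel, and what is
left is `m ∂ₜu + u ∂ₜm` once the two equations are substituted.
-/

open scoped RealInnerProductSpace

/-- The Laplacian `ΔF(x) = Σ_i ∂²F/∂x_i²(x)` of `F : ℝ^d → ℝ`. -/
noncomputable def laplacian {d : ℕ} (F : EuclideanSpace ℝ (Fin d) → ℝ)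
    (x : EuclideanSpace ℝ (Fin d)) : ℝ :=
  ∑ i, fderiv ℝ (fun y => fderiv ℝ F y (EuclideanSpace.single i 1)) x
    (EuclideanSpace.single i 1)

/-- The divergence `div V(x) = Σ_i ∂V_i/∂x_i(x)` of a vector field `V : ℝ^d → ℝ^d`. -/
noncomputable def diverg {d : ℕ}
    (V : EuclideanSpace ℝ (Fin d) → EuclideanSpace ℝ (Fin d))
    (x : EuclideanSpace ℝ (Fin d)) : ℝ :=
  ∑ i, fderiv ℝ V x (EuclideanSpace.single i 1) i

open Topology

section PartialDerivatives

variable {d : ℕ} {F G : EuclideanSpace ℝ (Fin d) → ℝ}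
  {V W : EuclideanSpace ℝ (Fin d) → EuclideanSpace ℝ (Fin d)} {x : EuclideanSpace ℝ (Fin d)}

noncomputable def partialDeriv (i : Fin d) (F : EuclideanSpace ℝ (Fin d) → ℝ)
    (x : EuclideanSpace ℝ (Fin d)) : ℝ :=
  fderiv ℝ F x (EuclideanSpace.single i 1)

lemma partialDeriv_mul (i : Fin d) (hF : DifferentiableAt ℝ F x) (hG : DifferentiableAt ℝ G x) :
    partialDeriv i (fun y => F y * G y) x =
      F x * partialDeriv i G x + G x * partialDeriv i F x := by
  simp [partialDeriv, fderiv_fun_mul hF hG]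

lemma partialDeriv_add (i : Fin d) (hF : DifferentiableAt ℝ F x) (hG : DifferentiableAt ℝ G x) :
    partialDeriv i (fun y => F y + G y) x = partialDeriv i F x + partialDeriv i G x := by
  simp [partialDeriv, fderiv_fun_add hF hG]

lemma Filter.EventuallyEq.partialDeriv_eq (i : Fin d) (hFG : F =ᶠ[𝓝 x] G) :
    partialDeriv i F x = partialDeriv i G x := by
  rw [partialDeriv, hFG.fderiv_eq, partialDeriv]

lemma ContDiffAt.differentiableAt_partialDeriv (i : Fin d) (hF : ContDiffAt ℝ 2 F x) :
    DifferentiableAt ℝ (partialDeriv i F) x :=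
  ((hF.fderiv_right (m := 1) (by norm_num)).differentiableAt one_ne_zero).clm_apply
    (differentiableAt_const _)

lemma ContDiffAt.differentiableAt_gradient (hF : ContDiffAt ℝ 2 F x) :
    DifferentiableAt ℝ (gradient F) x :=
  (InnerProductSpace.toDual ℝ _).symm.toContinuousLinearEquiv.differentiableAt.comp x
    ((hF.fderiv_right (m := 1) (by norm_num)).differentiableAt one_ne_zero)

lemma gradient_apply_eq_partialDeriv (i : Fin d) : gradient F x i = partialDeriv i F x := by
  have := inner_gradient_left (𝕜 := ℝ) (f := F) (x := x) (y := EuclideanSpace.single i 1)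
  rwa [EuclideanSpace.inner_single_right, one_mul, conj_trivial] at this

lemma inner_gradient_eq_sum (v : EuclideanSpace ℝ (Fin d)) :
    ⟪v, gradient F x⟫ = ∑ i, v i * partialDeriv i F x := by
  simp only [PiLp.inner_apply, gradient_apply_eq_partialDeriv, Real.inner_apply]

lemma laplacian_eq_sum_partialDeriv :
    laplacian F x = ∑ i, partialDeriv i (partialDeriv i F) x := rfl

lemma laplacian_mul (hF : ContDiffAt ℝ 2 F x) (hG : ContDiffAt ℝ 2 G x) :
    laplacian (fun y => F y * G y) x =
      F x * laplacian G x + G x * laplacian F x + 2 * ⟪gradient F x, gradient G x⟫ := by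
  have hF₁ := hF.differentiableAt two_ne_zero
  have hG₁ := hG.differentiableAt two_ne_zero
  have hfirst (i : Fin d) : partialDeriv i (fun y => F y * G y) =ᶠ[𝓝 x]
      fun y => F y * partialDeriv i G y + G y * partialDeriv i F y := by
    filter_upwards [hF.eventually (by simp), hG.eventually (by simp)] with y hFy hGy
    exact partialDeriv_mul i (hFy.differentiableAt two_ne_zero) (hGy.differentiableAt two_ne_zero)
  have hsecond (i : Fin d) : partialDeriv i (partialDeriv i fun y => F y * G y) x =
      F x * partialDeriv i (partialDeriv i G) x + G x * partialDeriv i (partialDeriv i F) x +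
        2 * (partialDeriv i F x * partialDeriv i G x) := by
    rw [(hfirst i).partialDeriv_eq,
      partialDeriv_add i (hF₁.fun_mul (hG.differentiableAt_partialDeriv i))
        (hG₁.fun_mul (hF.differentiableAt_partialDeriv i)),
      partialDeriv_mul i hF₁ (hG.differentiableAt_partialDeriv i),
      partialDeriv_mul i hG₁ (hF.differentiableAt_partialDeriv i)]
    ring
  simp only [laplacian_eq_sum_partialDeriv, hsecond, inner_gradient_eq_sum,
    gradient_apply_eq_partialDeriv, Finset.sum_add_distrib, Finset.mul_sum]

lemma diverg_eq_sum_partialDeriv (hV : DifferentiableAt ℝ V x) :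
    diverg V x = ∑ i, partialDeriv i (fun y => V y i) x := by
  refine Finset.sum_congr rfl fun i _ => ?_
  rw [partialDeriv, show (fun y => V y i) = EuclideanSpace.proj i ∘ V from rfl,
    ((EuclideanSpace.proj i).hasFDerivAt.comp x hV.hasFDerivAt).fderiv]
  rfl

lemma diverg_sub (hV : DifferentiableAt ℝ V x) (hW : DifferentiableAt ℝ W x) :
    diverg (fun y => V y - W y) x = diverg V x - diverg W x := by
  simp [diverg, fderiv_fun_sub hV hW]

lemma diverg_const_smul (c : ℝ) (hV : DifferentiableAt ℝ V x) :
    diverg (fun y => c • V y) x = c * diverg V x := by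
  simp [diverg, fderiv_fun_const_smul hV, Finset.mul_sum]

lemma diverg_smul (hF : DifferentiableAt ℝ F x) (hV : DifferentiableAt ℝ V x) :
    diverg (fun y => F y • V y) x = F x * diverg V x + ⟪V x, gradient F x⟫ := by
  have hVi := differentiableAt_euclidean.mp hV
  rw [diverg_eq_sum_partialDeriv (hF.fun_smul hV), diverg_eq_sum_partialDeriv hV,
    inner_gradient_eq_sum, Finset.mul_sum, ← Finset.sum_add_distrib]
  refine Finset.sum_congr rfl fun i _ => ?_
  simp only [PiLp.smul_apply, smul_eq_mul, partialDeriv_mul i hF (hVi i)]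

lemma diverg_gradient (hF : DifferentiableAt ℝ (gradient F) x) :
    diverg (gradient F) x = laplacian F x := by
  simp only [diverg_eq_sum_partialDeriv hF, gradient_apply_eq_partialDeriv,
    laplacian_eq_sum_partialDeriv]

end PartialDerivatives

lemma mul_smul_sub_div_smul {K E : Type*} [Field K] [AddCommGroup E] [Module K E] (a b c : K)
    (v w : E) (hb : b ≠ 0) : (a * b) • (v - (c / b) • w) = a • (b • v) - c • (a • w) := by
  rw [smul_sub, smul_smul, smul_smul, smul_smul]
  congr 2
  field_simp

theorem product_solves_reversed_fokker_planck_general {d : ℕ}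
    (h : ℝ → EuclideanSpace ℝ (Fin d) → EuclideanSpace ℝ (Fin d))
    (g : ℝ → ℝ)
    (u m : ℝ → EuclideanSpace ℝ (Fin d) → ℝ)
    (hh : ∀ t, ContDiff ℝ 1 (h t))
    (hut : ∀ x, ContDiff ℝ 1 (fun t => u t x))
    (hux : ∀ t, ContDiff ℝ 2 (u t))
    (hmt : ∀ x, ContDiff ℝ 1 (fun t => m t x))
    (hmx : ∀ t, ContDiff ℝ 2 (m t))
    (hmpos : ∀ t x, 0 < m t x)
    (hKBE : ∀ t x, deriv (fun s => u s x) t =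
      -⟪h t x, gradient (u t) x⟫ - (g t) ^ 2 / 2 * laplacian (u t) x)
    (hFP : ∀ t x, deriv (fun s => m s x) t =
      -diverg (fun y => m t y • h t y) x + (g t) ^ 2 / 2 * laplacian (m t) x) :
    ∀ t x, deriv (fun s => u s x * m s x) t =
      -diverg (fun y => (u t y * m t y) •
          (h t y - ((g t) ^ 2 / m t y) • gradient (m t) y)) x -
        (g t) ^ 2 / 2 * laplacian (fun y => u t y * m t y) x := by
  intro t x
  have hu : ContDiffAt ℝ 2 (u t) x := (hux t).contDiffAt
  have hm : ContDiffAt ℝ 2 (m t) x := (hmx t).contDiffAt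
  have hu₁ := hu.differentiableAt two_ne_zero
  have hmh : DifferentiableAt ℝ (fun y => m t y • h t y) x :=
    (hm.differentiableAt two_ne_zero).fun_smul ((hh t).differentiable one_ne_zero x)
  have hflux : (fun y => (u t y * m t y) • (h t y - ((g t) ^ 2 / m t y) • gradient (m t) y)) =
      fun y => u t y • (m t y • h t y) - (g t) ^ 2 • (u t y • gradient (m t) y) :=
    funext fun y => mul_smul_sub_div_smul _ _ _ _ _ (hmpos t y).ne'
  have hdiv : diverg (fun y => (u t y * m t y) •
      (h t y - ((g t) ^ 2 / m t y) • gradient (m t) y)) x =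
        u t x * diverg (fun y => m t y • h t y) x + m t x * ⟪h t x, gradient (u t) x⟫ -
          (g t) ^ 2 * (u t x * laplacian (m t) x + ⟪gradient (m t) x, gradient (u t) x⟫) := by
    rw [hflux, diverg_sub (hu₁.fun_smul hmh)
        ((differentiableAt_const _).fun_smul (hu₁.fun_smul hm.differentiableAt_gradient)),
      diverg_const_smul _ (hu₁.fun_smul hm.differentiableAt_gradient), diverg_smul hu₁ hmh,
      diverg_smul hu₁ hm.differentiableAt_gradient, diverg_gradient hm.differentiableAt_gradient,
      real_inner_smul_left]
  rw [deriv_fun_mul ((hut x).differentiable one_ne_zero t) ((hmt x).differentiable one_ne_zero t),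
    hKBE, hFP, hdiv, laplacian_mul hu hm, real_inner_comm (gradient (m t) x)]
  ring

/-- Anderson's time-reversal PDE identity.
Let `u, m : ℝ × ℝ^d → ℝ` be `C¹` in time and `C²` in space with `m > 0`, `h` a `C¹`-in-space
drift and `g` a scalar diffusion coefficient.  If `u` satisfies the backward Kolmogorov
equation `∂_t u = −⟨h, ∇_x u⟩ − (g²/2)Δ_x u` and `m` satisfies the Fokker–Planck equation
`∂_t m = −div_x(m h) + (g²/2)Δ_x m`, then with the reversed drift
`h̄ = h − g²·∇_x m/m`, the product `u·m` satisfies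
`∂_t(u·m) = −div_x(u·m·h̄) − (g²/2)Δ_x(u·m)` at every `(t,x)`. -/
theorem product_solves_reversed_fokker_planck {d : ℕ} (hd : 1 ≤ d)
    (h : ℝ → EuclideanSpace ℝ (Fin d) → EuclideanSpace ℝ (Fin d))
    (g : ℝ → ℝ)
    (u m : ℝ → EuclideanSpace ℝ (Fin d) → ℝ)
    (hh : ∀ t, ContDiff ℝ 1 (h t))
    (hut : ∀ x, ContDiff ℝ 1 (fun t => u t x))
    (hux : ∀ t, ContDiff ℝ 2 (u t))
    (hmt : ∀ x, ContDiff ℝ 1 (fun t => m t x))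
    (hmx : ∀ t, ContDiff ℝ 2 (m t))
    (hmpos : ∀ t x, 0 < m t x)
    (hKBE : ∀ t x, deriv (fun s => u s x) t =
      -⟪h t x, gradient (u t) x⟫ - (g t) ^ 2 / 2 * laplacian (u t) x)
    (hFP : ∀ t x, deriv (fun s => m s x) t =
      -diverg (fun y => m t y • h t y) x + (g t) ^ 2 / 2 * laplacian (m t) x) :
    ∀ t x, deriv (fun s => u s x * m s x) t =
      -diverg (fun y => (u t y * m t y) •
          (h t y - ((g t) ^ 2 / m t y) • gradient (m t) y)) x -
        (g t) ^ 2 / 2 * laplacian (fun y => u t y * m t y) x :=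
  product_solves_reversed_fokker_planck_general h g u m hh hut hux hmt hmx hmpos hKBE hFP
end
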